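/- Let c be a copula density, continuous and strictly positive on (0,1)², with C(u,v) = ∫₀^u ∫₀^v c and h(u,v) = ∂C(u,v)/∂v. Let X have continuous strictly increasing CDF F_X with density f_X, let U ~ Uniform(0,1) be independent of X, and let F_Y be a continuous strictly increasing CDF with density f_Y. Define Y = F_Y⁻¹( h⁻¹(U, F_X(X)) ). Then the joint density of (X,Y) is f_X(x) · f_Y(y) · c(F_Y(y), F_X(x)); in particular, the conditional CDF of Y given X = x is y ↦ h(F_Y(y), F_X(x)) and the marginal distribution of Y is F_Y. -/

import Mathlib

open Set MeasureTheory ProbabilityTheory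

/-!
Fix `ω` with `U ω ∈ (0,1)` and put `v = F_X(X ω)`. Since `c(·,v) > 0` integrates to `1`,
`u ↦ h(u,v)` is strictly increasing from `0` to `1` on `[0,1]`, so `w = h⁻¹(U ω, v)` lies in
`(0,1)` and `Y ω = F_Y⁻¹(w) ≤ y` iff `U ω ≤ h(F_Y(y), v)`. As `U` is uniform and independent of
`X`, this gives `P(X ∈ B, Y ≤ y) = ∫_B h(F_Y(y), F_X(t)) dP_X(t)`. Taking `B = ℝ`, the fact that
`F_X(X)` is uniform on `(0,1)` and `∫₀¹ c(u,v) dv = 1` give `F_Y` as the CDF of `Y`. Then `F_Y(Y)`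
is uniform as well, and the substitution `u = F_Y(s)` turns `∫_{-∞}^y f_Y(s) c(F_Y(s), v) ds`
into `h(F_Y(y), v)`, so both sides of the density claim agree on the quadrants
`(-∞,x] × (-∞,y]`.
-/

lemma MeasureTheory.Measure.ext_of_Iic_prod {μ ν : Measure (ℝ × ℝ)} [IsFiniteMeasure μ]
    (h : ∀ x y, μ (Iic x ×ˢ Iic y) = ν (Iic x ×ˢ Iic y)) : μ = ν := by
  have hspan : IsCountablySpanning (range (Iic : ℝ → Set ℝ)) :=
    ⟨fun n : ℕ => Iic (n : ℝ), fun n => mem_range_self _,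
      eq_univ_of_forall fun x => mem_iUnion.2 ⟨⌈x⌉₊, Nat.le_ceil x⟩⟩
  have hgen : (inferInstance : MeasurableSpace (ℝ × ℝ)) =
      MeasurableSpace.generateFrom (image2 (· ×ˢ ·) (range Iic) (range Iic)) := by
    rw [← generateFrom_prod_eq hspan hspan, ← borel_eq_generateFrom_Iic,
      ← BorelSpace.measurable_eq]
  refine Measure.ext_of_generateFrom_of_iUnion _ (fun n : ℕ => Iic (n : ℝ) ×ˢ Iic (n : ℝ)) hgen
    (isPiSystem_Iic.prod isPiSystem_Iic) ?_
    (fun n => mem_image2_of_mem (mem_range_self _) (mem_range_self _))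
    (fun n => measure_ne_top _ _) ?_
  · refine eq_univ_of_forall fun p => mem_iUnion.2 ⟨⌈max p.1 p.2⌉₊, ?_⟩
    have hceil := Nat.le_ceil (max p.1 p.2)
    exact ⟨(le_max_left _ _).trans hceil, (le_max_right _ _).trans hceil⟩
  · rintro _ ⟨_, ⟨x, rfl⟩, _, ⟨y, rfl⟩, rfl⟩
    exact h x y

lemma cdf_eq_of_measure_Iic {ν : Measure ℝ} [IsProbabilityMeasure ν] {F : ℝ → ℝ}
    (hF0 : ∀ x, 0 ≤ F x) (hF : ∀ x, ν (Iic x) = ENNReal.ofReal (F x)) : cdf ν = F := by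
  ext x
  rw [cdf_eq_real, measureReal_def, hF, ENNReal.toReal_ofReal (hF0 x)]

lemma map_cdf_eq_restrict_Ioo {ν : Measure ℝ} [IsProbabilityMeasure ν]
    (hcont : Continuous (cdf ν)) (hmono : StrictMono (cdf ν)) :
    ν.map (cdf ν) = volume.restrict (Ioo 0 1) := by
  set F := cdf ν
  have hpos : ∀ x, 0 < F x := fun x => (cdf_nonneg ν (x - 1)).trans_lt (hmono (by linarith))
  have hlt : ∀ x, F x < 1 := fun x => (hmono (lt_add_one x)).trans_le (cdf_le_one ν _)
  refine Measure.ext_of_Iic _ _ fun a => ?_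
  rw [Measure.map_apply hcont.measurable measurableSet_Iic,
    Measure.restrict_apply measurableSet_Iic]
  rcases le_or_gt a 0 with ha0 | ha0
  · have hpre : F ⁻¹' Iic a = ∅ :=
      eq_empty_of_forall_notMem fun x hx => (hpos x).not_ge (le_trans hx ha0)
    have hI : Iic a ∩ Ioo 0 1 = ∅ :=
      eq_empty_of_forall_notMem fun u hu => hu.2.1.not_ge (le_trans hu.1 ha0)
    simp [hpre, hI]
  rcases lt_or_ge a 1 with ha1 | ha1
  · obtain ⟨x, rfl⟩ : a ∈ range F := mem_range_of_exists_le_of_exists_ge hcont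
      ((tendsto_cdf_atBot ν).eventually_le_const ha0).exists
      ((tendsto_cdf_atTop ν).eventually_const_le ha1).exists
    have hpre : F ⁻¹' Iic (F x) = Iic x := ext fun y => hmono.le_iff_le
    have hI : Iic (F x) ∩ Ioo 0 1 = Ioc 0 (F x) :=
      ext fun u => ⟨fun hu => ⟨hu.2.1, hu.1⟩, fun hu => ⟨hu.2, hu.1, hu.2.trans_lt (hlt x)⟩⟩
    rw [hpre, hI, Real.volume_Ioc, sub_zero, ofReal_cdf]
  · have hpre : F ⁻¹' Iic a = univ := eq_univ_of_forall fun x => (hlt x).le.trans ha1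
    have hI : Iic a ∩ Ioo 0 1 = Ioo 0 1 :=
      inter_eq_self_of_subset_right fun u hu => hu.2.le.trans ha1
    simp [hpre, hI]

lemma map_eq_restrict_Ioo_of_measure_Iic {ν : Measure ℝ} [IsProbabilityMeasure ν] {F : ℝ → ℝ}
    (hF0 : ∀ x, 0 ≤ F x) (hF : ∀ x, ν (Iic x) = ENNReal.ofReal (F x)) (hcont : Continuous F)
    (hmono : StrictMono F) : ν.map F = volume.restrict (Ioo 0 1) := by
  obtain rfl := cdf_eq_of_measure_Iic hF0 hF
  exact map_cdf_eq_restrict_Ioo hcont hmono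

lemma setLIntegral_Iic_comp_of_map_eq_restrict_Ioo {ν : Measure ℝ} {F : ℝ → ℝ}
    (hFmeas : Measurable F) (hmono : StrictMono F) (hmap : ν.map F = volume.restrict (Ioo 0 1))
    {φ : ℝ → ENNReal} (hφ : Measurable φ) {y : ℝ} (hy : F y < 1) :
    ∫⁻ s in Iic y, φ (F s) ∂ν = ∫⁻ u in Ioc 0 (F y), φ u := by
  have hpre : F ⁻¹' Iic (F y) = Iic y := ext fun s => hmono.le_iff_le
  have hI : Iic (F y) ∩ Ioo 0 1 = Ioc 0 (F y) :=
    ext fun u => ⟨fun hu => ⟨hu.2.1, hu.1⟩, fun hu => ⟨hu.2, hu.1, hu.2.trans_lt hy⟩⟩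
  rw [← hpre, ← setLIntegral_map measurableSet_Iic hφ hFmeas, hmap,
    Measure.restrict_restrict measurableSet_Iic, hI]

lemma eq_withDensity_of_measure_Iic {ν : Measure ℝ} [IsFiniteMeasure ν] {f : ℝ → ℝ}
    (hf0 : ∀ x, 0 ≤ f x) (hint : ∀ x, IntegrableOn f (Iic x))
    (h : ∀ x, ν (Iic x) = ENNReal.ofReal (∫ t in Iic x, f t)) :
    ν = volume.withDensity fun t => ENNReal.ofReal (f t) := by
  refine Measure.ext_of_Iic _ _ fun x => ?_
  rw [h, withDensity_apply _ measurableSet_Iic,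
    ofReal_integral_eq_lintegral_ofReal (hint x) (ae_of_all _ hf0)]

lemma eq_withDensity_and_map_eq_restrict_Ioo {ν : Measure ℝ} [IsProbabilityMeasure ν]
    {f F : ℝ → ℝ} (hf0 : ∀ x, 0 ≤ f x) (hF : ∀ x, F x = ∫ t in Iic x, f t)
    (hFpos : ∀ x, 0 < F x) (hcont : Continuous F) (hmono : StrictMono F)
    (hν : ∀ x, ν (Iic x) = ENNReal.ofReal (F x)) :
    ν = (volume.withDensity fun t => ENNReal.ofReal (f t)) ∧
      ν.map F = volume.restrict (Ioo 0 1) := by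
  refine ⟨eq_withDensity_of_measure_Iic hf0 (fun x => ?_) fun x => by rw [hν, hF],
    map_eq_restrict_Ioo_of_measure_Iic (fun x => (hFpos x).le) hν hcont hmono⟩
  exact Integrable.of_integral_ne_zero (by rw [← hF]; exact (hFpos x).ne')

lemma setLIntegral_withDensity_ofReal {α : Type*} [MeasurableSpace α] {μ : Measure α}
    {f g : α → ℝ} {s : Set α} (hs : MeasurableSet s) (hf : Measurable f) (hf0 : ∀ t, 0 ≤ f t)
    (hint : IntegrableOn f s μ) (hg : Measurable g) (hg01 : ∀ t, g t ∈ Icc (0 : ℝ) 1) :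
    ∫⁻ t in s, ENNReal.ofReal (g t) ∂(μ.withDensity fun t => ENNReal.ofReal (f t)) =
      ENNReal.ofReal (∫ t in s, g t * f t ∂μ) := by
  have hgf : IntegrableOn (fun t => g t * f t) s μ :=
    Integrable.mono hint (hg.mul hf).aestronglyMeasurable (ae_of_all _ fun t => by
      rw [norm_mul]
      exact mul_le_of_le_one_left (norm_nonneg _) (by simpa [abs_le] using
        ⟨(neg_nonpos.2 zero_le_one).trans (hg01 t).1, (hg01 t).2⟩))
  rw [restrict_withDensity hs, lintegral_withDensity_eq_lintegral_mul _ hf.ennreal_ofReal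
    hg.ennreal_ofReal, ofReal_integral_eq_lintegral_ofReal hgf
    (ae_of_all _ fun t => mul_nonneg (hg01 t).1 (hf0 t))]
  exact lintegral_congr fun t => by simp [← ENNReal.ofReal_mul (hf0 t), mul_comm]

lemma aemeasurable_of_ae_forall_le_iff {Ω : Type*} [MeasurableSpace Ω] {μ : Measure Ω}
    {Y : Ω → ℝ} {S : ℝ → Set Ω} (hS : ∀ y, MeasurableSet (S y))
    (h : ∀ᵐ ω ∂μ, ∀ y, Y ω ≤ y ↔ ω ∈ S y) : AEMeasurable Y μ := by
  refine NullMeasurable.aemeasurable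
    (measurable_of_Iic (δ := NullMeasurableSpace Ω μ) fun y => ?_)
  refine (hS y).nullMeasurableSet.congr ?_
  filter_upwards [h] with ω hω
  exact propext (hω y).symm

lemma withDensity_ofReal_mul_mul_eq_withDensity_prod {α β : Type*} [MeasurableSpace α]
    [MeasurableSpace β] {μ : Measure α} {ν : Measure β} [SFinite μ] [SFinite ν] {f : α → ℝ}
    {g : β → ℝ} {k : α × β → ℝ} (hf : Measurable f) (hg : Measurable g) (hk : Measurable k)
    (hf0 : ∀ x, 0 ≤ f x) (hg0 : ∀ y, 0 ≤ g y) :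
    (μ.prod ν).withDensity (fun p => ENNReal.ofReal (f p.1 * g p.2 * k p)) =
      ((μ.withDensity fun x => ENNReal.ofReal (f x)).prod
        (ν.withDensity fun y => ENNReal.ofReal (g y))).withDensity
          fun p => ENNReal.ofReal (k p) := by
  rw [prod_withDensity hf.ennreal_ofReal hg.ennreal_ofReal,
    ← withDensity_mul _ (by fun_prop) hk.ennreal_ofReal]
  congr 1
  funext p
  rw [ENNReal.ofReal_mul (mul_nonneg (hf0 _) (hg0 _)), ENNReal.ofReal_mul (hf0 _)]
  rfl

lemma measure_mem_and_le_comp_eq_lintegral {Ω α : Type*} [MeasurableSpace Ω]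
    [MeasurableSpace α] {μ : Measure Ω} [IsFiniteMeasure μ] {X : Ω → α} {U : Ω → ℝ}
    (hX : Measurable X) (hU : Measurable U) (hXU : IndepFun X U μ) {g : α → ℝ}
    (hg : Measurable g) {B : Set α} (hB : MeasurableSet B) :
    μ {ω | X ω ∈ B ∧ U ω ≤ g (X ω)} = ∫⁻ t in B, μ {ω | U ω ≤ g t} ∂(μ.map X) := by
  set S := {p : α × ℝ | p.1 ∈ B ∧ p.2 ≤ g p.1}
  have hS : MeasurableSet S :=
    (measurable_fst hB).inter (measurableSet_le measurable_snd (hg.comp measurable_fst))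
  have hfiber : ∀ t,
      (μ.map U) (Prod.mk t ⁻¹' S) = B.indicator (fun t => μ {ω | U ω ≤ g t}) t := by
    intro t
    by_cases ht : t ∈ B
    · have hpre : Prod.mk t ⁻¹' S = Iic (g t) := ext fun u => by simp [S, ht]
      rw [indicator_of_mem ht, hpre, Measure.map_apply hU measurableSet_Iic]
      rfl
    · simp [S, ht]
  calc μ {ω | X ω ∈ B ∧ U ω ≤ g (X ω)} = μ.map (fun ω => (X ω, U ω)) S :=
        (Measure.map_apply (hX.prodMk hU) hS).symm
    _ = ((μ.map X).prod (μ.map U)) S := by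
        rw [hXU.map_prod_eq_prod_map_map hX.aemeasurable hU.aemeasurable]
    _ = ∫⁻ t, B.indicator (fun t => μ {ω | U ω ≤ g t}) t ∂(μ.map X) := by
        rw [Measure.prod_apply hS]; exact lintegral_congr hfiber
    _ = _ := lintegral_indicator hB _

lemma measure_mem_and_le_eq_setLIntegral_of_ae_le_iff {Ω α : Type*} [MeasurableSpace Ω]
    [MeasurableSpace α] {μ : Measure Ω} [IsFiniteMeasure μ] {X : Ω → α} {U Y : Ω → ℝ}
    (hX : Measurable X) (hU : Measurable U) (hXU : IndepFun X U μ)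
    (hUunif : ∀ u ∈ Icc (0 : ℝ) 1, μ {ω | U ω ≤ u} = ENNReal.ofReal u) {G : ℝ → α → ℝ}
    (hG : ∀ y, Measurable (G y)) (hG01 : ∀ y t, G y t ∈ Icc (0 : ℝ) 1)
    (hYG : ∀ᵐ ω ∂μ, ∀ y, Y ω ≤ y ↔ U ω ≤ G y (X ω)) ⦃B : Set α⦄ (hB : MeasurableSet B)
    (y : ℝ) :
    μ {ω | X ω ∈ B ∧ Y ω ≤ y} = ∫⁻ t in B, ENNReal.ofReal (G y t) ∂(μ.map X) := by
  have hae : {ω | X ω ∈ B ∧ Y ω ≤ y} =ᵐ[μ] {ω | X ω ∈ B ∧ U ω ≤ G y (X ω)} := by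
    filter_upwards [hYG] with ω hω
    exact propext (and_congr_right fun _ => hω y)
  rw [measure_congr hae, measure_mem_and_le_comp_eq_lintegral hX hU hXU (hG y) hB]
  exact setLIntegral_congr_fun hB fun t _ => hUunif _ (hG01 y t)

lemma integrableOn_Ioc_of_integral_eq_one {f : ℝ → ℝ} (hone : ∫ u in (0 : ℝ)..1, f u = 1) :
    IntegrableOn f (Ioc 0 1) :=
  (intervalIntegral.intervalIntegrable_of_integral_ne_zero (by rw [hone]; exact one_ne_zero)).1

namespace Copula

noncomputable def hFunction (c : ℝ → ℝ → ℝ) (u v : ℝ) : ℝ := ∫ s in (0 : ℝ)..u, c s v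

variable {c : ℝ → ℝ → ℝ}

lemma hFunction_zero (v : ℝ) : hFunction c 0 v = 0 := intervalIntegral.integral_same

lemma strictMonoOn_hFunction {v : ℝ} (hpos : ∀ u ∈ Ioo (0 : ℝ) 1, 0 < c u v)
    (hone : ∫ u in (0 : ℝ)..1, c u v = 1) : StrictMonoOn (hFunction c · v) (Icc 0 1) := by
  intro a ha b hb hab
  have hint := integrableOn_Ioc_of_integral_eq_one hone
  have hIab : IntervalIntegrable (c · v) volume a b :=
    (intervalIntegrable_iff_integrableOn_Ioc_of_le hab.le).2
      (hint.mono_set (Ioc_subset_Ioc ha.1 hb.2))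
  have hI0a : IntervalIntegrable (c · v) volume 0 a :=
    (intervalIntegrable_iff_integrableOn_Ioc_of_le ha.1).2
      (hint.mono_set (Ioc_subset_Ioc le_rfl ha.2))
  have hsplit : hFunction c b v = hFunction c a v + ∫ s in a..b, c s v :=
    (intervalIntegral.integral_add_adjacent_intervals hI0a hIab).symm
  have hgap : 0 < ∫ s in a..b, c s v :=
    intervalIntegral.intervalIntegral_pos_of_pos_on hIab
      (fun s hs => hpos s ⟨ha.1.trans_lt hs.1, hs.2.trans_le hb.2⟩) hab
  dsimp only
  linarith

lemma hFunction_mem_Icc {v : ℝ} (hpos : ∀ u ∈ Ioo (0 : ℝ) 1, 0 < c u v)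
    (hone : ∫ u in (0 : ℝ)..1, c u v = 1) {a : ℝ} (ha : a ∈ Icc (0 : ℝ) 1) :
    hFunction c a v ∈ Icc (0 : ℝ) 1 := by
  have hmono := (strictMonoOn_hFunction hpos hone).monotoneOn
  have h0 := hmono (left_mem_Icc.2 zero_le_one) ha ha.1
  have h1 := hmono ha (right_mem_Icc.2 zero_le_one) ha.2
  simp only [hFunction_zero] at h0
  exact ⟨h0, h1.trans_eq hone⟩

lemma measurable_hFunction (hc : Measurable (Function.uncurry c)) {a : ℝ} (ha : 0 ≤ a) :
    Measurable (hFunction c a) := by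
  have hswap : Measurable (Function.uncurry fun v s => c s v) := hc.comp measurable_swap
  have hm := (hswap.stronglyMeasurable.integral_prod_right
    (ν := volume.restrict (Ioc 0 a))).measurable
  have heq : hFunction c a = fun v => ∫ s in Ioc 0 a, c s v :=
    funext fun v => intervalIntegral.integral_of_le ha
  exact heq ▸ hm

lemma ofReal_hFunction {v : ℝ} (hpos : ∀ u ∈ Ioo (0 : ℝ) 1, 0 < c u v)
    (hone : ∫ u in (0 : ℝ)..1, c u v = 1) {a : ℝ} (ha : a ∈ Ico (0 : ℝ) 1) :
    ENNReal.ofReal (hFunction c a v) = ∫⁻ s in Ioc 0 a, ENNReal.ofReal (c s v) := by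
  rw [hFunction, intervalIntegral.integral_of_le ha.1]
  exact ofReal_integral_eq_lintegral_ofReal
    ((integrableOn_Ioc_of_integral_eq_one hone).mono_set (Ioc_subset_Ioc le_rfl ha.2.le))
    (ae_restrict_of_forall_mem measurableSet_Ioc fun s hs =>
      (hpos s ⟨hs.1, hs.2.trans_lt ha.2⟩).le)

lemma lintegral_hFunction_comp {ν : Measure ℝ} {F : ℝ → ℝ}
    (hc : Measurable (Function.uncurry c))
    (hpos : ∀ u ∈ Ioo (0 : ℝ) 1, ∀ v ∈ Ioo (0 : ℝ) 1, 0 < c u v)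
    (hone₁ : ∀ v ∈ Ioo (0 : ℝ) 1, ∫ u in (0 : ℝ)..1, c u v = 1)
    (hone₂ : ∀ u ∈ Ioo (0 : ℝ) 1, ∫ v in (0 : ℝ)..1, c u v = 1) (hF : Measurable F)
    (hmap : ν.map F = volume.restrict (Ioo 0 1)) {a : ℝ} (ha : a ∈ Ico (0 : ℝ) 1) :
    ∫⁻ t, ENNReal.ofReal (hFunction c a (F t)) ∂ν = ENNReal.ofReal a := by
  have hcol : ∀ u ∈ Ioc 0 a, ∫⁻ v in Ioo 0 1, ENNReal.ofReal (c u v) = 1 := by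
    intro u hu
    have hu' : u ∈ Ioo (0 : ℝ) 1 := ⟨hu.1, hu.2.trans_lt ha.2⟩
    rw [← ofReal_integral_eq_lintegral_ofReal
      ((integrableOn_Ioc_of_integral_eq_one (hone₂ u hu')).mono_set Ioo_subset_Ioc_self)
      (ae_restrict_of_forall_mem measurableSet_Ioo fun v hv => (hpos u hu' v hv).le),
      setIntegral_congr_set Ioo_ae_eq_Ioc, ← intervalIntegral.integral_of_le zero_le_one,
      hone₂ u hu', ENNReal.ofReal_one]
  calc ∫⁻ t, ENNReal.ofReal (hFunction c a (F t)) ∂ν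
      = ∫⁻ v in Ioo 0 1, ENNReal.ofReal (hFunction c a v) := by
        rw [← hmap, lintegral_map (measurable_hFunction hc ha.1).ennreal_ofReal hF]
    _ = ∫⁻ v in Ioo 0 1, ∫⁻ u in Ioc 0 a, ENNReal.ofReal (c u v) :=
        setLIntegral_congr_fun measurableSet_Ioo fun v hv =>
          ofReal_hFunction (hpos · · v hv) (hone₁ v hv) ha
    _ = ∫⁻ u in Ioc 0 a, ∫⁻ v in Ioo 0 1, ENNReal.ofReal (c u v) :=
        lintegral_lintegral_swap (hc.comp measurable_swap).ennreal_ofReal.aemeasurable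
    _ = ENNReal.ofReal a := by
        rw [setLIntegral_congr_fun measurableSet_Ioc hcol]
        simp [Real.volume_Ioc]

lemma le_iff_le_hFunction {v : ℝ} (hpos : ∀ u ∈ Ioo (0 : ℝ) 1, 0 < c u v)
    (hone : ∫ u in (0 : ℝ)..1, c u v = 1) {F Finv : ℝ → ℝ} (hFmono : StrictMono F)
    (hFrange : ∀ y, F y ∈ Icc (0 : ℝ) 1) (hFinv : ∀ u ∈ Ioo (0 : ℝ) 1, F (Finv u) = u)
    {u w : ℝ} (hu : u ∈ Ioo (0 : ℝ) 1) (hw : w ∈ Icc (0 : ℝ) 1) (hwu : hFunction c w v = u)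
    (y : ℝ) : Finv w ≤ y ↔ u ≤ hFunction c (F y) v := by
  have hw' : w ∈ Ioo (0 : ℝ) 1 := by
    refine ⟨hw.1.lt_of_ne ?_, hw.2.lt_of_ne ?_⟩
    · rintro rfl
      rw [hFunction_zero] at hwu
      exact hu.1.ne hwu
    · rintro rfl
      rw [hFunction, hone] at hwu
      exact hu.2.ne' hwu
  rw [← hFmono.le_iff_le, hFinv w hw', ← hwu]
  exact ((strictMonoOn_hFunction hpos hone).le_iff_le hw (hFrange y)).symm

lemma withDensity_prod_apply_Iic_prod {νX νY : Measure ℝ} [SFinite νX] [SFinite νY]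
    (hc : Measurable (Function.uncurry c))
    (hpos : ∀ u ∈ Ioo (0 : ℝ) 1, ∀ v ∈ Ioo (0 : ℝ) 1, 0 < c u v)
    (hone : ∀ v ∈ Ioo (0 : ℝ) 1, ∫ u in (0 : ℝ)..1, c u v = 1) {FX FY : ℝ → ℝ}
    (hFXmeas : Measurable FX) (hFXrange : ∀ x, FX x ∈ Ioo (0 : ℝ) 1) (hFYmeas : Measurable FY)
    (hFYmono : StrictMono FY) (hmapY : νY.map FY = volume.restrict (Ioo 0 1)) {y : ℝ}
    (hy : FY y ∈ Ioo (0 : ℝ) 1) (x : ℝ) :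
    ((νX.prod νY).withDensity fun p => ENNReal.ofReal (c (FY p.2) (FX p.1)))
        (Iic x ×ˢ Iic y) =
      ∫⁻ t in Iic x, ENNReal.ofReal (hFunction c (FY y) (FX t)) ∂νX := by
  have hdens : Measurable fun p : ℝ × ℝ => ENNReal.ofReal (c (FY p.2) (FX p.1)) :=
    (hc.comp ((hFYmeas.comp measurable_snd).prodMk
      (hFXmeas.comp measurable_fst))).ennreal_ofReal
  rw [withDensity_apply _ (measurableSet_Iic.prod measurableSet_Iic), ← Measure.prod_restrict,
    lintegral_prod _ hdens.aemeasurable]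
  refine setLIntegral_congr_fun measurableSet_Iic fun t _ => ?_
  have hslice : Measurable fun u => c u (FX t) :=
    hc.comp (measurable_id.prodMk measurable_const)
  dsimp only
  rw [setLIntegral_Iic_comp_of_map_eq_restrict_Ioo (φ := fun u => ENNReal.ofReal (c u (FX t)))
    hFYmeas hFYmono hmapY hslice.ennreal_ofReal hy.2]
  exact (ofReal_hFunction (hpos · · _ (hFXrange t)) (hone _ (hFXrange t)) ⟨hy.1.le, hy.2⟩).symm

end Copula

theorem simulation_step_correct_general
    (c : ℝ → ℝ → ℝ)
    (hc_meas : Measurable (Function.uncurry c))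
    (hc_pos : ∀ u ∈ Ioo (0:ℝ) 1, ∀ v ∈ Ioo (0:ℝ) 1, 0 < c u v)
    (hc_marg1 : ∀ v ∈ Ioo (0:ℝ) 1, (∫ u in (0:ℝ)..1, c u v) = 1)
    (hc_marg2 : ∀ u ∈ Ioo (0:ℝ) 1, (∫ v in (0:ℝ)..1, c u v) = 1)
    (h : ℝ → ℝ → ℝ) (hdef : ∀ u v : ℝ, h u v = ∫ s in (0:ℝ)..u, c s v)
    (hinv : ℝ → ℝ → ℝ)
    (hhinv : ∀ v ∈ Ioo (0:ℝ) 1, ∀ u ∈ Icc (0:ℝ) 1,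
      h (hinv u v) v = u ∧ hinv (h u v) v = u ∧ hinv u v ∈ Icc (0:ℝ) 1)
    (fX fY : ℝ → ℝ) (FX FY : ℝ → ℝ)
    (hfX : Measurable fX) (hfY : Measurable fY)
    (hfXpos : ∀ x, 0 ≤ fX x) (hfYpos : ∀ y, 0 ≤ fY y)
    (hFX : ∀ x : ℝ, FX x = ∫ t in Iic x, fX t)
    (hFY : ∀ y : ℝ, FY y = ∫ t in Iic y, fY t)
    (hFXmono : StrictMono FX) (hFYmono : StrictMono FY)
    (hFXcont : Continuous FX) (hFYcont : Continuous FY)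
    (hFXrange : ∀ x, FX x ∈ Ioo (0:ℝ) 1) (hFYrange : ∀ y, FY y ∈ Ioo (0:ℝ) 1)
    (FYinv : ℝ → ℝ)
    (hFYinv : (∀ y : ℝ, FYinv (FY y) = y) ∧ ∀ u ∈ Ioo (0:ℝ) 1, FY (FYinv u) = u)
    {Ω : Type*} [MeasurableSpace Ω] (μ : Measure Ω) [IsProbabilityMeasure μ]
    (X U : Ω → ℝ) (hXmeas : Measurable X) (hUmeas : Measurable U)
    (hindep : IndepFun X U μ)
    (hXcdf : ∀ x : ℝ, μ {ω | X ω ≤ x} = ENNReal.ofReal (FX x))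
    (hUunif : ∀ u ∈ Icc (0:ℝ) 1, μ {ω | U ω ≤ u} = ENNReal.ofReal u)
    (hU01 : ∀ᵐ ω ∂μ, U ω ∈ Ioo (0:ℝ) 1)
    (Y : Ω → ℝ) (hY : ∀ ω, Y ω = FYinv (hinv (U ω) (FX (X ω)))) :
    (Measure.map (fun ω => (X ω, Y ω)) μ =
      volume.withDensity
        (fun p => ENNReal.ofReal (fX p.1 * fY p.2 * c (FY p.2) (FX p.1)))) ∧
    (∀ x y : ℝ, μ {ω | X ω ≤ x ∧ Y ω ≤ y} =
      ENNReal.ofReal (∫ t in Iic x, h (FY y) (FX t) * fX t)) ∧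
    (∀ y : ℝ, μ {ω | Y ω ≤ y} = ENNReal.ofReal (FY y)) := by
  obtain rfl : h = Copula.hFunction c := funext₂ hdef
  have : IsProbabilityMeasure (μ.map X) := Measure.isProbabilityMeasure_map hXmeas.aemeasurable
  obtain ⟨hlawX, hunifX⟩ := eq_withDensity_and_map_eq_restrict_Ioo hfXpos hFX
    (fun x => (hFXrange x).1) hFXcont hFXmono fun x => by
      rw [Measure.map_apply hXmeas measurableSet_Iic]; exact hXcdf x
  have hg : ∀ y, Measurable fun t => Copula.hFunction c (FY y) (FX t) := fun y =>
    (Copula.measurable_hFunction hc_meas (hFYrange y).1.le).comp hFXcont.measurable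
  have hg01 : ∀ y t, Copula.hFunction c (FY y) (FX t) ∈ Icc (0 : ℝ) 1 := fun y t =>
    Copula.hFunction_mem_Icc (hc_pos · · _ (hFXrange t)) (hc_marg1 _ (hFXrange t))
      (Ioo_subset_Icc_self (hFYrange y))
  have hequiv : ∀ᵐ ω ∂μ, ∀ y, Y ω ≤ y ↔ U ω ≤ Copula.hFunction c (FY y) (FX (X ω)) := by
    filter_upwards [hU01] with ω hω y
    have hv := hFXrange (X ω)
    obtain ⟨hwu, -, hw⟩ := hhinv _ hv _ (Ioo_subset_Icc_self hω)
    rw [hY]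
    exact Copula.le_iff_le_hFunction (hc_pos · · _ hv) (hc_marg1 _ hv) hFYmono
      (fun y => Ioo_subset_Icc_self (hFYrange y)) hFYinv.2 hω hw hwu y
  have hjoint :=
    measure_mem_and_le_eq_setLIntegral_of_ae_le_iff hXmeas hUmeas hindep hUunif hg hg01 hequiv
  have hmarginal : ∀ y, μ {ω | Y ω ≤ y} = ENNReal.ofReal (FY y) := fun y => by
    simpa [Measure.restrict_univ, Copula.lintegral_hFunction_comp hc_meas hc_pos hc_marg1
      hc_marg2 hFXcont.measurable hunifX ⟨(hFYrange y).1.le, (hFYrange y).2⟩]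
      using hjoint MeasurableSet.univ y
  -- `Y` need not be measurable: nothing makes `hinv` or `FYinv` measurable.
  have hYae : AEMeasurable Y μ :=
    aemeasurable_of_ae_forall_le_iff (fun y => measurableSet_le hUmeas ((hg y).comp hXmeas)) hequiv
  have : IsProbabilityMeasure (μ.map Y) := Measure.isProbabilityMeasure_map hYae
  obtain ⟨hlawY, hunifY⟩ := eq_withDensity_and_map_eq_restrict_Ioo hfYpos hFY
    (fun y => (hFYrange y).1) hFYcont hFYmono fun y => by
      rw [Measure.map_apply_of_aemeasurable hYae measurableSet_Iic]; exact hmarginal y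
  have hdensity : volume.withDensity
        (fun p : ℝ × ℝ => ENNReal.ofReal (fX p.1 * fY p.2 * c (FY p.2) (FX p.1))) =
      ((μ.map X).prod (μ.map Y)).withDensity fun p => ENNReal.ofReal (c (FY p.2) (FX p.1)) := by
    rw [Measure.volume_eq_prod, withDensity_ofReal_mul_mul_eq_withDensity_prod
      (k := fun p => c (FY p.2) (FX p.1)) hfX hfY (by fun_prop) hfXpos hfYpos, hlawX, hlawY]
  have : IsProbabilityMeasure (μ.map fun ω => (X ω, Y ω)) :=
    Measure.isProbabilityMeasure_map (hXmeas.aemeasurable.prodMk hYae)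
  refine ⟨Measure.ext_of_Iic_prod fun x y => ?_, fun x y => ?_, hmarginal⟩
  · rw [Measure.map_apply_of_aemeasurable (hXmeas.aemeasurable.prodMk hYae)
      (measurableSet_Iic.prod measurableSet_Iic), hdensity,
      Copula.withDensity_prod_apply_Iic_prod hc_meas hc_pos hc_marg1 hFXcont.measurable hFXrange
        hFYcont.measurable hFYmono hunifY (hFYrange y)]
    exact hjoint measurableSet_Iic y
  · rw [show {ω | X ω ≤ x ∧ Y ω ≤ y} = {ω | X ω ∈ Iic x ∧ Y ω ≤ y} from rfl,
      hjoint measurableSet_Iic, hlawX]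
    exact setLIntegral_withDensity_ofReal measurableSet_Iic hfX hfXpos
      (Integrable.of_integral_ne_zero (by rw [← hFX]; exact (hFXrange x).1.ne')) (hg y) (hg01 y)

/-- Correctness of one step of the simulation algorithm: if
`Y = F_Y⁻¹(h⁻¹(U, F_X(X)))` with `U ~ Uniform(0,1)` independent of `X`, then
`(X,Y)` has joint density `f_X(x) f_Y(y) c(F_Y(y), F_X(x))`; in particular the
conditional CDF of `Y` given `X = x` is `y ↦ h(F_Y(y), F_X(x))` and the marginal
distribution of `Y` is `F_Y`. -/
theorem simulation_step_correct
    (c : ℝ → ℝ → ℝ) (hc_cont : ContinuousOn (Function.uncurry c) (Ioo 0 1 ×ˢ Ioo 0 1))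
    (hc_meas : Measurable (Function.uncurry c))
    (hc_pos : ∀ u ∈ Ioo (0:ℝ) 1, ∀ v ∈ Ioo (0:ℝ) 1, 0 < c u v)
    (hc_marg1 : ∀ v ∈ Ioo (0:ℝ) 1, (∫ u in (0:ℝ)..1, c u v) = 1)
    (hc_marg2 : ∀ u ∈ Ioo (0:ℝ) 1, (∫ v in (0:ℝ)..1, c u v) = 1)
    (h : ℝ → ℝ → ℝ) (hdef : ∀ u v : ℝ, h u v = ∫ s in (0:ℝ)..u, c s v)
    (hinv : ℝ → ℝ → ℝ)
    (hhinv : ∀ v ∈ Ioo (0:ℝ) 1, ∀ u ∈ Icc (0:ℝ) 1,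
      h (hinv u v) v = u ∧ hinv (h u v) v = u ∧ hinv u v ∈ Icc (0:ℝ) 1)
    (fX fY : ℝ → ℝ) (FX FY : ℝ → ℝ)
    (hfX : Measurable fX) (hfY : Measurable fY)
    (hfXpos : ∀ x, 0 ≤ fX x) (hfYpos : ∀ y, 0 ≤ fY y)
    (hFX : ∀ x : ℝ, FX x = ∫ t in Iic x, fX t)
    (hFY : ∀ y : ℝ, FY y = ∫ t in Iic y, fY t)
    (hFXmono : StrictMono FX) (hFYmono : StrictMono FY)
    (hFXcont : Continuous FX) (hFYcont : Continuous FY)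
    (hFXrange : ∀ x, FX x ∈ Ioo (0:ℝ) 1) (hFYrange : ∀ y, FY y ∈ Ioo (0:ℝ) 1)
    (FYinv : ℝ → ℝ)
    (hFYinv : (∀ y : ℝ, FYinv (FY y) = y) ∧ ∀ u ∈ Ioo (0:ℝ) 1, FY (FYinv u) = u)
    {Ω : Type*} [MeasurableSpace Ω] (μ : Measure Ω) [IsProbabilityMeasure μ]
    (X U : Ω → ℝ) (hXmeas : Measurable X) (hUmeas : Measurable U)
    (hindep : IndepFun X U μ)
    (hXcdf : ∀ x : ℝ, μ {ω | X ω ≤ x} = ENNReal.ofReal (FX x))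
    (hUunif : ∀ u ∈ Icc (0:ℝ) 1, μ {ω | U ω ≤ u} = ENNReal.ofReal u)
    (hU01 : ∀ᵐ ω ∂μ, U ω ∈ Ioo (0:ℝ) 1)
    (Y : Ω → ℝ) (hY : ∀ ω, Y ω = FYinv (hinv (U ω) (FX (X ω)))) :
    (Measure.map (fun ω => (X ω, Y ω)) μ =
      volume.withDensity
        (fun p => ENNReal.ofReal (fX p.1 * fY p.2 * c (FY p.2) (FX p.1)))) ∧
    (∀ x y : ℝ, μ {ω | X ω ≤ x ∧ Y ω ≤ y} =
      ENNReal.ofReal (∫ t in Iic x, h (FY y) (FX t) * fX t)) ∧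
    (∀ y : ℝ, μ {ω | Y ω ≤ y} = ENNReal.ofReal (FY y)) :=
  simulation_step_correct_general c hc_meas hc_pos hc_marg1 hc_marg2 h hdef hinv hhinv fX fY FX FY
    hfX hfY hfXpos hfYpos hFX hFY hFXmono hFYmono hFXcont hFYcont hFXrange hFYrange FYinv hFYinv μ X
    U hXmeas hUmeas hindep hXcdf hUunif hU01 Y hY
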